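/- arXiv:math/0410477 — 7 statements merged into one kernel-verified Lean document; each statement's English description precedes it below -/
import Mathlib

section
/- For every integer n ≥ 1, S(n) = ⌊n!/e⌋ if n is odd, and S(n) = ⌊n!/e⌋ + 1 if n is even. -/
private lemma derangements_div_factorial (n : ℕ) :
    (numDerangements n : ℝ) / n.factorial =
      ∑ k ∈ Finset.range (n + 1), (-1 : ℝ) ^ k / k.factorial := by
  rw [← Int.cast_natCast, numDerangements_sum]
  push_cast
  rw [Finset.sum_div]
  refine Finset.sum_congr rfl ?_
  intro k hk
  have h_le : k ≤ n := Finset.mem_range_succ_iff.mp hk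
  rw [Nat.ascFactorial_eq_div, add_tsub_cancel_of_le h_le]
  push_cast [Nat.factorial_dvd_factorial h_le]
  field_simp [Nat.factorial_ne_zero]

theorem subfactorial_floor (n : ℕ) (hn : 1 ≤ n) :
    (numDerangements n : ℤ) =
      ⌊(n.factorial : ℝ) / Real.exp 1⌋ + if Even n then 1 else 0 := by
  have hfac : (0:ℝ) < n.factorial := by positivity
  have hfac1 : (0:ℝ) < (n+1).factorial := by positivity
  have hn1 : (0:ℝ) < (n:ℝ) + 1 := by positivity
  have hn2 : (0:ℝ) < (n:ℝ) + 2 := by positivity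
  set x : ℝ := (n.factorial : ℝ) / Real.exp 1 with hxdef
  have hx : x = (n.factorial : ℝ) * Real.exp (-1) := by
    rw [hxdef, Real.exp_neg, div_eq_mul_inv]
  have hD : (numDerangements n : ℝ) =
      (n.factorial : ℝ) * ∑ k ∈ Finset.range (n+1), (-1:ℝ)^k / k.factorial := by
    rw [← derangements_div_factorial n]
    field_simp
  have hb := Real.exp_bound (x := (-1:ℝ)) (by norm_num) (n := n + 2) (by omega)
  have habs : |(-1:ℝ)| = 1 := by norm_num
  rw [habs, one_pow, one_mul] at hb
  -- split off the last term of the (n+2)-term sum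
  have hsum : ∑ m ∈ Finset.range (n + 2), (-1:ℝ) ^ m / m.factorial
      = (∑ k ∈ Finset.range (n+1), (-1:ℝ)^k / k.factorial)
        + (-1:ℝ)^(n+1) / (n+1).factorial := by
    rw [Finset.sum_range_succ]
  rw [hsum] at hb
  -- multiply the bound by n!
  set B : ℝ := (n+3) / (((n:ℝ)+1) * ((n:ℝ)+2)^2) with hBdef
  have hfacsucc : ((n+1).factorial : ℝ) = ((n:ℝ)+1) * n.factorial := by
    rw [Nat.factorial_succ]; push_cast; ring
  have hfacsucc2 : ((n+2).factorial : ℝ) = ((n:ℝ)+2) * (((n:ℝ)+1) * n.factorial) := by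
    rw [show n + 2 = (n+1) + 1 by ring, Nat.factorial_succ]
    push_cast [hfacsucc]; ring
  have key : |x - ((numDerangements n : ℝ) + (-1:ℝ)^(n+1) / ((n:ℝ)+1))| ≤ B := by
    have h1 : x - ((numDerangements n : ℝ) + (-1:ℝ)^(n+1) / ((n:ℝ)+1))
        = (n.factorial : ℝ) * (Real.exp (-1)
            - ((∑ k ∈ Finset.range (n+1), (-1:ℝ)^k / k.factorial)
              + (-1:ℝ)^(n+1) / (n+1).factorial)) := by
      rw [hx, hD, hfacsucc]
      field_simp
    rw [h1, abs_mul, abs_of_pos hfac]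
    have h2 : (n.factorial : ℝ) * ((((n+2).succ : ℕ) : ℝ) / (((n+2).factorial : ℝ) * ((n+2 : ℕ) : ℝ))) = B := by
      rw [hBdef]
      push_cast [hfacsucc2]
      field_simp
      ring
    rw [← h2]
    exact mul_le_mul_of_nonneg_left hb (le_of_lt hfac)
  have hBlt : B < 1 / ((n:ℝ)+1) := by
    rw [hBdef, div_lt_div_iff₀ (by positivity) hn1]
    nlinarith
  have hhalf : 1 / ((n:ℝ)+1) ≤ 1/2 := by
    rw [div_le_div_iff₀ hn1 (by norm_num)]
    have : (1:ℝ) ≤ (n:ℝ) := by exact_mod_cast hn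
    linarith
  have hkey' := abs_le.mp key
  rcases Nat.even_or_odd n with he | ho
  · -- even case: (-1)^(n+1) = -1, floor = D - 1
    have hsign : (-1:ℝ)^(n+1) = -1 := by
      rw [Even.add_one he |>.neg_one_pow]
    rw [hsign, neg_div] at hkey'
    have hfloor : ⌊x⌋ = (numDerangements n : ℤ) - 1 := by
      rw [Int.floor_eq_iff]
      constructor
      · push_cast
        set D : ℝ := ((numDerangements n : ℕ) : ℝ)
        linarith [hkey'.1, hBlt, hhalf]
      · push_cast
        set D : ℝ := ((numDerangements n : ℕ) : ℝ)
        linarith [hkey'.2, hBlt]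
    rw [if_pos he, hfloor]
    ring
  · -- odd case: (-1)^(n+1) = 1, floor = D
    have hsign : (-1:ℝ)^(n+1) = 1 := by
      rw [Odd.add_one ho |>.neg_one_pow]
    rw [hsign] at hkey'
    have hfloor : ⌊x⌋ = (numDerangements n : ℤ) := by
      rw [Int.floor_eq_iff]
      constructor
      · push_cast
        linarith [hkey'.1, hBlt]
      · push_cast
        linarith [hkey'.2, hBlt, hhalf]
    rw [if_neg (Nat.not_even_iff_odd.mpr ho), hfloor]
    ring
end

section
/- For every prime p, Σ_{k=0}^p (-1)^k · S(k) ≡ 0 (mod p). -/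
/-!
`(-1)^k S(k)` is the binomial transform of `b i = (-1)^i i!`, so by the hockey-stick identity the
sum equals `∑ i ≤ p, C(p+1, i+1) b i`. Modulo `p` the coefficient `C(p+1, j)` vanishes for
`2 ≤ j ≤ p - 1`, leaving `b 0 + b (p-1) + b p = 1 - 1 + 0` by Wilson's theorem.
-/

open Finset Nat

theorem neg_one_pow_mul_numDerangements (n : ℕ) :
    (-1 : ℤ) ^ n * numDerangements n =
      ∑ i ∈ range (n + 1), (n.choose i : ℤ) * ((-1) ^ i * i !) := by
  rw [numDerangements_sum, mul_sum, ← sum_range_reflect]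
  refine sum_congr rfl fun i hi => ?_
  obtain ⟨j, rfl⟩ := exists_add_of_le (mem_range_succ_iff.mp hi)
  have hsign : ((-1 : ℤ) ^ j) ^ 2 = 1 := by rw [← pow_mul, pow_mul', neg_one_sq, one_pow]
  rw [add_tsub_cancel_right, add_tsub_cancel_left, add_tsub_cancel_right,
    ascFactorial_eq_factorial_mul_choose, add_comm j i]
  push_cast
  linear_combination (-1 : ℤ) ^ i * (i ! * ((i + j).choose i : ℤ)) * hsign

theorem sum_range_sum_range_choose_mul {R : Type*} [Semiring R] (b : ℕ → R) (n : ℕ) :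
    ∑ k ∈ range (n + 1), ∑ i ∈ range (k + 1), (k.choose i : R) * b i =
      ∑ i ∈ range (n + 1), ((n + 1).choose (i + 1) : R) * b i := by
  calc ∑ k ∈ range (n + 1), ∑ i ∈ range (k + 1), (k.choose i : R) * b i
      = ∑ i ∈ range (n + 1), ∑ k ∈ Icc i n, (k.choose i : R) * b i :=
        sum_comm' fun k i => by simp only [mem_range, mem_Icc]; omega
    _ = ∑ i ∈ range (n + 1), ((n + 1).choose (i + 1) : R) * b i :=
        sum_congr rfl fun i _ => by rw [← sum_mul, ← Nat.cast_sum, sum_Icc_choose]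

theorem Nat.Prime.sum_range_choose_add_one_mul {R : Type*} [Semiring R] {p : ℕ} [CharP R p]
    (hp : p.Prime) (b : ℕ → R) :
    ∑ i ∈ range (p + 1), ((p + 1).choose (i + 1) : R) * b i = b 0 + b (p - 1) + b p := by
  have hp2 := hp.two_le
  have hsub : ({0, p - 1, p} : Finset ℕ) ⊆ range (p + 1) := by
    intro i; simp only [mem_insert, mem_singleton, mem_range]; omega
  rw [← sum_subset hsub, sum_insert (by simp only [mem_insert, mem_singleton]; omega), sum_pair (by omega), add_assoc]
  · rw [Nat.sub_add_cancel hp.one_le, choose_one_right, choose_self, choose_succ_self_right]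
    push_cast
    rw [CharP.cast_eq_zero, zero_add, one_mul, one_mul, one_mul]
  · intro i hi hi'
    simp only [mem_insert, mem_singleton, mem_range, not_or] at hi hi'
    rw [(CharP.cast_eq_zero_iff R p _).mpr (hp.dvd_choose (by omega) (by omega) (by omega)),
      zero_mul]

theorem alternating_sum_subfactorial (p : ℕ) (hp : p.Prime) :
    (∑ k ∈ Finset.range (p + 1), (-1 : ℤ) ^ k * numDerangements k) ≡ 0 [ZMOD p] := by
  have := Fact.mk hp
  have hwilson : (-1 : ZMod p) ^ (p - 1) * ((p - 1)! : ℕ) = -1 := by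
    rw [ZMod.pow_card_sub_one_eq_one (neg_ne_zero.mpr one_ne_zero), one_mul, ZMod.wilsons_lemma]
  have hfactorial : ((p ! : ℕ) : ZMod p) = 0 :=
    (ZMod.natCast_eq_zero_iff _ _).mpr (dvd_factorial hp.pos le_rfl)
  simp_rw [neg_one_pow_mul_numDerangements]
  rw [sum_range_sum_range_choose_mul, Int.modEq_zero_iff_dvd,
    ← ZMod.intCast_zmod_eq_zero_iff_dvd]
  push_cast
  rw [hp.sum_range_choose_add_one_mul, hwilson, hfactorial]
  ring
end

section
/- For every positive integer n, K(n) ≡ (-1)^{n-1} · S(n-1) (mod n). -/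
/-- Kurepa's left factorial. -/
def K (n : ℕ) : ℕ := ∑ k ∈ Finset.range n, k.factorial

/-!
Modulo `m + 1` every factor `m - i` of `m!/k! = (k + 1) ⋯ m` is congruent to `-(i + 1)`, so
`m!/k! ≡ (-1)^(m-k) (m - k)!`. The sign cancels the alternating sign of the subfactorial, and
`(-1)^m · !m` becomes `∑_{k ≤ m} (m - k)! = K(m + 1)`.
-/

open Finset Nat

theorem ascFactorial_cast_eq_neg_one_pow_mul_factorial {R : Type*} [CommRing R] {n : ℕ}
    (hn : (n : R) = 0) (j : ℕ) :
    ∀ k, k + j = n → (k.ascFactorial j : R) = (-1) ^ j * (j ! : R) := by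
  induction j with
  | zero => simp
  | succ j ih =>
    intro k hkj
    have hk : (k : R) = -(j + 1) := by
      rw [eq_neg_iff_add_eq_zero, ← hn, ← hkj]
      push_cast
      ring
    have hasc : k.ascFactorial (j + 1) = k * (k + 1).ascFactorial j := by
      rw [succ_ascFactorial, ascFactorial_succ]
    rw [hasc, Nat.cast_mul, ih (k + 1) (by omega), hk, factorial_succ]
    push_cast
    ring

theorem neg_one_pow_mul_numDerangements_eq_sum_factorial {R : Type*} [CommRing R] {m : ℕ}
    (hm : ((m + 1 : ℕ) : R) = 0) :
    (-1) ^ m * (numDerangements m : R) = ∑ j ∈ range (m + 1), (j ! : R) := by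
  have hsum := congrArg (Int.cast : ℤ → R) (numDerangements_sum m)
  push_cast at hsum
  have hterm : ∀ k ∈ range (m + 1),
      (-1 : R) ^ m * ((-1) ^ k * ((k + 1).ascFactorial (m - k) : R)) = ((m - k) ! : R) := by
    intro k hk
    have hkm : k ≤ m := Nat.lt_succ_iff.mp (mem_range.mp hk)
    rw [ascFactorial_cast_eq_neg_one_pow_mul_factorial hm (m - k) (k + 1) (by omega),
      ← mul_assoc, ← mul_assoc, ← pow_add, ← pow_add,
      show m + k + (m - k) = m + m by omega, Even.neg_one_pow ⟨m, rfl⟩, one_mul]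
  rw [hsum, mul_sum, sum_congr rfl hterm]
  simpa using sum_range_reflect (fun j => (j ! : R)) (m + 1)

theorem kurepa_subfactorial_congr (n : ℕ) (hn : 0 < n) :
    (K n : ℤ) ≡ (-1) ^ (n - 1) * numDerangements (n - 1) [ZMOD n] := by
  obtain ⟨m, rfl⟩ : ∃ m, n = m + 1 := ⟨n - 1, by omega⟩
  rw [← ZMod.intCast_eq_intCast_iff, Nat.add_sub_cancel]
  push_cast [K]
  exact (neg_one_pow_mul_numDerangements_eq_sum_factorial (ZMod.natCast_self _)).symm
end

section
/- For every positive integer n, K(n) ≡ (-1)^{n-1}·⌊(n-1)!/e⌋ + δ (mod n), where δ = 0 if n-1 is odd and δ = 1 if n-1 is even (with the convention that for n = 1 the right side is ⌊1/e⌋ + 1 = 1). -/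
open Finset Filter Topology Nat

section AlternatingSeries

variable {E : Type*} [CommRing E] [PartialOrder E] [IsOrderedRing E]
  [TopologicalSpace E] [OrderClosedTopology E] {l : E} {f : ℕ → E}

theorem Antitone.neg_one_pow_mul_sub_alternating_series_nonneg
    (hfl : Tendsto (fun n ↦ ∑ i ∈ range n, (-1) ^ i * f i) atTop (𝓝 l))
    (hfa : Antitone f) (N : ℕ) : 0 ≤ (-1) ^ N * (l - ∑ i ∈ range N, (-1) ^ i * f i) := by
  obtain ⟨k, rfl | rfl⟩ := N.even_or_odd'
  · simpa [pow_mul] using hfa.alternating_series_le_tendsto hfl k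
  · simpa [pow_succ, pow_mul] using hfa.tendsto_le_alternating_series hfl k

theorem Antitone.alternating_series_remainder_mem_Icc
    (hfl : Tendsto (fun n ↦ ∑ i ∈ range n, (-1) ^ i * f i) atTop (𝓝 l))
    (hfa : Antitone f) (N : ℕ) :
    (-1) ^ N * (l - ∑ i ∈ range N, (-1) ^ i * f i) ∈ Set.Icc (f N - f (N + 1)) (f N) := by
  have h₁ := hfa.neg_one_pow_mul_sub_alternating_series_nonneg hfl (N + 1)
  have h₂ := hfa.neg_one_pow_mul_sub_alternating_series_nonneg hfl (N + 2)
  have hsq : ((-1 : E) ^ N) * (-1) ^ N = 1 := by rw [← mul_pow]; simp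
  simp only [sum_range_succ, pow_succ] at h₁ h₂ ⊢
  constructor
  · linear_combination h₂ - (f N - f (N + 1)) * hsq
  · linear_combination h₁ + f N * hsq

end AlternatingSeries

theorem antitone_inv_factorial : Antitone fun n : ℕ ↦ ((n ! : ℝ))⁻¹ :=
  fun _ _ h ↦ inv_anti₀ (by positivity) (mod_cast factorial_le h)

theorem tendsto_sum_neg_one_pow_mul_inv_factorial :
    Tendsto (fun n ↦ ∑ i ∈ range n, (-1) ^ i * ((i ! : ℝ))⁻¹) atTop (𝓝 (Real.exp (-1))) := by
  rw [Real.exp_eq_exp_ℝ]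
  simpa only [div_eq_mul_inv] using (NormedSpace.expSeries_div_hasSum_exp (-1 : ℝ)).tendsto_sum_nat

theorem numDerangements_eq_factorial_mul_sum (m : ℕ) :
    (numDerangements m : ℝ) = m ! * ∑ k ∈ range (m + 1), (-1) ^ k * ((k ! : ℝ))⁻¹ := by
  rw [← Int.cast_natCast, numDerangements_sum, mul_sum]
  push_cast
  refine sum_congr rfl fun k hk ↦ ?_
  have hfact : (k ! : ℝ) * (k + 1).ascFactorial (m - k) = m ! := by
    rw [← Nat.cast_mul, factorial_mul_ascFactorial, Nat.add_sub_cancel' (mem_range_succ_iff.mp hk)]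
  rw [← hfact]
  field_simp

theorem factorial_mul_exp_neg_one_sub_numDerangements_mem_Icc (m : ℕ) :
    (-1) ^ (m + 1) * (m ! * Real.exp (-1) - numDerangements m) ∈
      Set.Icc (1 / (m + 2 : ℝ)) (1 / (m + 1)) := by
  have h := antitone_inv_factorial.alternating_series_remainder_mem_Icc
    tendsto_sum_neg_one_pow_mul_inv_factorial (m + 1)
  have hm : (0 : ℝ) < m ! := by positivity
  have hrem : (-1) ^ (m + 1) * (m ! * Real.exp (-1) - numDerangements m) =
      m ! * ((-1) ^ (m + 1) * (Real.exp (-1) - ∑ i ∈ range (m + 1), (-1) ^ i * ((i ! : ℝ))⁻¹)) := by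
    rw [numDerangements_eq_factorial_mul_sum]; ring
  have h₁ : (m ! : ℝ) * ((m + 1)! : ℝ)⁻¹ = 1 / (m + 1) := by
    rw [factorial_succ]; push_cast; field_simp
  have h₂ : (m ! : ℝ) * (((m + 1)! : ℝ)⁻¹ - ((m + 1 + 1)! : ℝ)⁻¹) = 1 / (m + 2) := by
    rw [factorial_succ (m + 1), factorial_succ]; push_cast; field_simp; ring
  rw [hrem, ← h₁, ← h₂]
  exact ⟨mul_le_mul_of_nonneg_left h.1 hm.le, mul_le_mul_of_nonneg_left h.2 hm.le⟩

theorem floor_factorial_div_exp (m : ℕ) :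
    ⌊(m ! : ℝ) / Real.exp 1⌋ = numDerangements m - if Even m then 1 else 0 := by
  obtain ⟨hlo, hhi⟩ := factorial_mul_exp_neg_one_sub_numDerangements_mem_Icc m
  have hpos : (0 : ℝ) < 1 / (m + 2) := by positivity
  rw [div_eq_mul_inv, ← Real.exp_neg, Int.floor_eq_iff]
  rcases m.even_or_odd with hm | hm
  · have hle : 1 / (m + 1 : ℝ) ≤ 1 := by
      rw [div_le_one (by positivity)]; linarith [(m.cast_nonneg : (0 : ℝ) ≤ m)]
    rw [hm.add_one.neg_one_pow] at hlo hhi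
    rw [if_pos hm]; push_cast
    constructor <;> linarith
  · have hlt : 1 / (m + 1 : ℝ) < 1 := by
      rw [div_lt_one (by positivity)]; exact_mod_cast Nat.lt_add_of_pos_left hm.pos
    rw [hm.add_one.neg_one_pow] at hlo hhi
    rw [if_neg (Nat.not_even_iff_odd.mpr hm)]; push_cast
    constructor <;> linarith

theorem Nat.cast_descFactorial_eq_neg_one_pow_mul_factorial {R : Type*} [CommRing R] {n j : ℕ}
    (hn : ((n + 1 : ℕ) : R) = 0) (hj : j ≤ n) : (n.descFactorial j : R) = (-1) ^ j * j ! := by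
  induction j with
  | zero => simp
  | succ j ih =>
    have hsub : ((n - j : ℕ) : R) = -(j + 1) := by
      rw [Nat.cast_sub (by omega)]; push_cast at hn; linear_combination hn
    rw [descFactorial_succ, Nat.cast_mul, ih (by omega), hsub, factorial_succ]
    push_cast; ring

theorem K_succ_modEq_numDerangements (m : ℕ) :
    (K (m + 1) : ℤ) ≡ (-1) ^ m * numDerangements m [ZMOD (m + 1 : ℕ)] := by
  have hchar : ((m + 1 : ℕ) : ZMod (m + 1)) = 0 := ZMod.natCast_self _
  have hK : ((K (m + 1) : ℤ) : ZMod (m + 1)) = ∑ k ∈ range (m + 1), ((m - k)! : ZMod (m + 1)) := by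
    rw [K, ← sum_range_reflect, add_tsub_cancel_right]
    push_cast
    rfl
  have hD : ((numDerangements m : ℤ) : ZMod (m + 1)) =
      (-1) ^ m * ∑ k ∈ range (m + 1), ((m - k)! : ZMod (m + 1)) := by
    rw [numDerangements_sum, mul_sum]
    push_cast
    refine sum_congr rfl fun k hk ↦ ?_
    have hkm := mem_range_succ_iff.mp hk
    rw [← add_descFactorial_eq_ascFactorial, Nat.add_sub_cancel' hkm,
      Nat.cast_descFactorial_eq_neg_one_pow_mul_factorial hchar (m.sub_le k), ← mul_assoc,
      ← pow_add, Nat.add_sub_cancel' hkm]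
  rw [← ZMod.intCast_eq_intCast_iff, Int.cast_mul, hK, hD, Int.cast_pow, Int.cast_neg,
    Int.cast_one, ← mul_assoc, ← mul_pow]
  simp

theorem kurepa_floor_congr (n : ℕ) (hn : 0 < n) :
    (K n : ℤ) ≡ (-1) ^ (n - 1) * ⌊((n - 1).factorial : ℝ) / Real.exp 1⌋ +
      (if Even (n - 1) then 1 else 0) [ZMOD n] := by
  obtain ⟨m, rfl⟩ : ∃ m, n = m + 1 := ⟨n - 1, by omega⟩
  rw [Nat.add_sub_cancel, floor_factorial_div_exp]
  convert K_succ_modEq_numDerangements m using 2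
  split_ifs with hm
  · rw [hm.neg_one_pow]; ring
  · ring
end

section
/- Let p be a prime and 1 ≤ l ≤ p. Then (l-1)! · (K(p) - K(p-l)) ≡ -S(l-1) (mod p). -/
/-!
By Wilson's theorem, `j! (p - 1 - j)! ≡ (-1)^(j + 1) (mod p)` for `j < p`. Since
`K p - K (p - l) = ∑_{j < l} (p - 1 - j)!`, multiplying by `(l - 1)! = j! · (l - 1)!/j!` turns the
difference into `-∑_{j < l} (-1)^j (l - 1)!/j! = -S(l - 1)`, the subfactorial being Mathlib's
`numDerangements`.
-/

open Finset Nat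

theorem K_eq_K_sub_add_sum {n l : ℕ} (h : l ≤ n) :
    K n = K (n - l) + ∑ j ∈ range l, (n - 1 - j)! := by
  obtain ⟨a, rfl⟩ := Nat.exists_eq_add_of_le' h
  rw [Nat.add_sub_cancel, K, K, sum_range_add, ← sum_range_reflect (fun i => (a + i)!)]
  congr 1
  refine sum_congr rfl fun j hj => ?_
  have hjl := mem_range.mp hj
  congr 1
  omega

theorem ZMod.factorial_mul_factorial_sub_one_sub {p : ℕ} [Fact p.Prime] {j : ℕ} (h : j < p) :
    (j ! : ZMod p) * (p - 1 - j)! = (-1) ^ (j + 1) := by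
  have hwilson := congrArg (Nat.cast : ℕ → ZMod p)
    (Nat.factorial_mul_descFactorial (n := p - 1) (k := j) (by omega))
  rw [Nat.cast_mul, ZMod.cast_descFactorial h.le, ZMod.wilsons_lemma] at hwilson
  have hsq : ((-1 : ZMod p) ^ j) ^ 2 = 1 := by rw [← pow_mul, pow_mul', neg_one_sq, one_pow]
  linear_combination (-1) ^ j * hwilson - (j ! * (p - 1 - j)! : ZMod p) * hsq

theorem factorial_mul_sum_factorial_sub_eq_neg_numDerangements {p : ℕ} [Fact p.Prime] {m : ℕ}
    (h : m < p) :
    (m ! : ZMod p) * ∑ j ∈ range (m + 1), ((p - 1 - j)! : ZMod p) = -numDerangements m := by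
  have hD := congrArg (Int.cast : ℤ → ZMod p) (numDerangements_sum m)
  push_cast at hD
  rw [hD, mul_sum, ← sum_neg_distrib]
  refine sum_congr rfl fun j hj => ?_
  have hjm : j ≤ m := Nat.lt_succ_iff.mp (mem_range.mp hj)
  have hm : (m ! : ZMod p) = j ! * (j + 1).ascFactorial (m - j) := by
    rw [← Nat.cast_mul, Nat.factorial_mul_ascFactorial, Nat.add_sub_cancel' hjm]
  rw [hm, mul_comm (j ! : ZMod p), mul_assoc,
    ZMod.factorial_mul_factorial_sub_one_sub (by omega), pow_succ]
  ring

theorem kurepa_diff_congr (p l : ℕ) (hp : p.Prime) (hl1 : 1 ≤ l) (hlp : l ≤ p) :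
    ((l - 1).factorial : ℤ) * ((K p : ℤ) - K (p - l)) ≡
      -(numDerangements (l - 1) : ℤ) [ZMOD p] := by
  have : Fact p.Prime := ⟨hp⟩
  obtain ⟨m, rfl⟩ : ∃ m, l = m + 1 := ⟨l - 1, by omega⟩
  rw [← ZMod.intCast_eq_intCast_iff, K_eq_K_sub_add_sum hlp]
  push_cast
  rw [add_sub_cancel_left]
  exact factorial_mul_sum_factorial_sub_eq_neg_numDerangements (by omega)
end

section
/- Let p be an odd prime and 0 ≤ n < p. Then K(p) ≡ K(n) + (-1)^n · n! · S(p-1-n) (mod p). -/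
open Nat

lemma K_succ (n : ℕ) : K (n + 1) = K n + n ! :=
  Finset.sum_range_succ _ _

lemma numDerangements_succ_cast {R : Type*} [CommRing R] (m : ℕ) :
    (numDerangements (m + 1) : R) = (m + 1) * numDerangements m - (-1) ^ m := by
  exact_mod_cast congrArg (Int.cast : ℤ → R) (numDerangements_succ m)

theorem K_add_eq_of_natCast_eq_zero {R : Type*} [CommRing R] (m n : ℕ)
    (hN : ((n + m + 1 : ℕ) : R) = 0) :
    (K (n + m + 1) : R) = K n + (-1) ^ m * n ! * numDerangements m := by
  induction m generalizing n with
  | zero => simp [K_succ]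
  | succ m ih =>
    have hn : (n + 1 : R) = -(m + 1) := by
      push_cast at hN
      linear_combination hN
    have hK := ih (n + 1) (by rw [← hN]; congr 1; omega)
    rw [show n + (m + 1) + 1 = n + 1 + m + 1 by omega, hK, K_succ, factorial_succ,
      numDerangements_succ_cast]
    push_cast
    rw [hn]
    linear_combination -(n ! : R) * (even_two_mul m).neg_one_pow (α := R)

theorem kurepa_congr_subfactorial_general (p n : ℕ) (hodd : Odd p) (hn : n < p) :
    (K p : ℤ) ≡ (K n : ℤ) + (-1) ^ n * n.factorial * numDerangements (p - 1 - n) [ZMOD p] := by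
  rw [← ZMod.intCast_eq_intCast_iff]
  have hp : n + (p - 1 - n) + 1 = p := by omega
  have hsign : (-1 : ZMod p) ^ (p - 1 - n) = (-1) ^ n := by
    obtain ⟨k, rfl⟩ := hodd
    exact neg_one_pow_congr (by grind)
  have h := K_add_eq_of_natCast_eq_zero (p - 1 - n) n (by rw [hp, ZMod.natCast_self])
  rw [hp, hsign] at h
  push_cast
  exact h

theorem kurepa_congr_subfactorial (p n : ℕ) (hp : p.Prime) (hodd : Odd p) (hn : n < p) :
    (K p : ℤ) ≡ (K n : ℤ) + (-1) ^ n * n.factorial * numDerangements (p - 1 - n) [ZMOD p] :=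
  kurepa_congr_subfactorial_general p n hodd hn
end

section
/- Let p be an odd prime with K(p) ≢ 0 (mod p), and suppose p divides K(n) for some n with 0 < n < p. Then p does not divide S(p-1-n). -/
open Nat Finset

theorem K_add (a b : ℕ) : K (a + b) = K a + ∑ j ∈ range b, (a + b - 1 - j)! := by
  rw [K, K, sum_range_add, ← sum_range_reflect (fun i => (a + i)!)]
  congr 1
  refine sum_congr rfl fun j hj => ?_
  rw [mem_range] at hj
  congr 1
  omega

namespace ZMod

variable {p : ℕ} [Fact p.Prime]

theorem factorial_ne_zero_of_lt {k : ℕ} (hk : k < p) : (k ! : ZMod p) ≠ 0 := by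
  rw [Ne, natCast_eq_zero_iff, (Fact.out : p.Prime).dvd_factorial]
  omega

theorem factorial_sub_one_sub_mul_factorial {j : ℕ} (hj : j < p) :
    ((p - 1 - j)! * j ! : ZMod p) = (-1) ^ (j + 1) := by
  induction j with
  | zero => simp
  | succ j ih =>
    have hsucc : p - 1 - j = (p - 1 - (j + 1)) + 1 := by omega
    have hcast : ((p - 1 - j : ℕ) : ZMod p) = -((j + 1 : ℕ) : ZMod p) := by
      rw [eq_neg_iff_add_eq_zero, ← Nat.cast_add, natCast_eq_zero_iff]
      exact dvd_of_eq (by omega)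
    have ih := ih (by omega)
    rw [hsucc, factorial_succ, Nat.cast_mul, ← hsucc, hcast] at ih
    rw [factorial_succ]
    push_cast at ih ⊢
    linear_combination -ih

theorem neg_one_pow_mul_ascFactorial_eq {j m : ℕ} (hj : j ≤ m) (hm : m < p) :
    ((-1) ^ j * (j + 1).ascFactorial (m - j) : ZMod p) = -(m ! * (p - 1 - j)!) := by
  have hasc : (j ! * (j + 1).ascFactorial (m - j) : ZMod p) = m ! := by
    rw [← Nat.cast_mul, factorial_mul_ascFactorial, Nat.add_sub_cancel' hj]
  apply mul_left_cancel₀ (factorial_ne_zero_of_lt (p := p) (hj.trans_lt hm))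
  linear_combination (-1) ^ j * hasc + m ! * factorial_sub_one_sub_mul_factorial (hj.trans_lt hm)

theorem numDerangements_eq_neg_factorial_mul_sum {m : ℕ} (hm : m < p) :
    (numDerangements m : ZMod p) = -(m ! * ∑ j ∈ range (m + 1), ((p - 1 - j)! : ZMod p)) := by
  have hsum := congrArg (Int.cast : ℤ → ZMod p) (numDerangements_sum m)
  push_cast at hsum
  rw [hsum, mul_sum, ← sum_neg_distrib]
  exact sum_congr rfl fun j hj => neg_one_pow_mul_ascFactorial_eq (mem_range_succ_iff.mp hj) hm

end ZMod

theorem kurepa_pair_subfactorial_not_dvd_general (p n : ℕ) (hp : p.Prime)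
    (hKp : ¬ p ∣ K p) (hnp : n < p) (hdvd : p ∣ K n) :
    ¬ p ∣ numDerangements (p - 1 - n) := by
  have := Fact.mk hp
  set m := p - 1 - n
  have hKp_split := K_add n (m + 1)
  rw [show n + (m + 1) = p by omega] at hKp_split
  have hKp_cast : (K p : ZMod p) = ∑ j ∈ range (m + 1), ((p - 1 - j)! : ZMod p) := by
    rw [hKp_split, Nat.cast_add, (ZMod.natCast_eq_zero_iff _ _).mpr hdvd, zero_add]
    push_cast
    rfl
  rw [← ZMod.natCast_eq_zero_iff, ZMod.numDerangements_eq_neg_factorial_mul_sum (by omega),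
    ← hKp_cast, neg_eq_zero]
  exact mul_ne_zero (ZMod.factorial_ne_zero_of_lt (by omega)) (by rwa [Ne, ZMod.natCast_eq_zero_iff])

theorem kurepa_pair_subfactorial_not_dvd (p n : ℕ) (hp : p.Prime) (hodd : Odd p)
    (hKp : ¬ p ∣ K p) (hn0 : 0 < n) (hnp : n < p) (hdvd : p ∣ K n) :
    ¬ p ∣ numDerangements (p - 1 - n) :=
  kurepa_pair_subfactorial_not_dvd_general p n hp hKp hnp hdvd
end
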